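/- arXiv:1708.01077 — 2 statements merged into one kernel-verified Lean document; each statement's English description precedes it below -/
import Mathlib

section
/- Let f₁, f₂ be analytic circle diffeomorphisms with f₁ ≠ id and f₂ ≠ id. Then there exists an analytic circle diffeomorphism h such that the map (h∘f₁∘h⁻¹) ∘ f₂⁻¹ has a fixed point on ℝ/ℤ; in particular rot((h∘f₁∘h⁻¹) ∘ f₂⁻¹) = 0. -/
open Filter Topology

/-- An analytic circle diffeomorphism, given by an analytic, strictly increasing lift
`F : ℝ → ℝ` with `F (x+1) = F x + 1`, together with an analytic inverse. -/
structure AnalyticCircleDiffeo where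
  toFun : ℝ → ℝ
  invFun : ℝ → ℝ
  analyticAt_toFun : ∀ x, AnalyticAt ℝ toFun x
  analyticAt_invFun : ∀ x, AnalyticAt ℝ invFun x
  strictMono_toFun : StrictMono toFun
  leftInverse : Function.LeftInverse invFun toFun
  rightInverse : Function.RightInverse invFun toFun
  map_add_one : ∀ x, toFun (x + 1) = toFun x + 1

namespace AnalyticCircleDiffeo

/-- The rotation number of (the chosen lift of) a circle diffeomorphism. -/
noncomputable def rot (f : AnalyticCircleDiffeo) : ℝ :=
  limUnder atTop fun n : ℕ => f.toFun^[n] 0 / n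

/-- The composition of two analytic circle diffeomorphisms. -/
def comp (f g : AnalyticCircleDiffeo) : AnalyticCircleDiffeo where
  toFun := f.toFun ∘ g.toFun
  invFun := g.invFun ∘ f.invFun
  analyticAt_toFun := fun x => (f.analyticAt_toFun _).comp (g.analyticAt_toFun x)
  analyticAt_invFun := fun x => (g.analyticAt_invFun _).comp (f.analyticAt_invFun x)
  strictMono_toFun := f.strictMono_toFun.comp g.strictMono_toFun
  leftInverse := fun x => by
    show g.invFun (f.invFun (f.toFun (g.toFun x))) = x
    rw [f.leftInverse (g.toFun x), g.leftInverse x]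
  rightInverse := fun x => by
    show f.toFun (g.toFun (g.invFun (f.invFun x))) = x
    rw [g.rightInverse (f.invFun x), f.rightInverse x]
  map_add_one := fun x => by
    show f.toFun (g.toFun (x + 1)) = f.toFun (g.toFun x) + 1
    rw [g.map_add_one, f.map_add_one]

/-- The inverse of an analytic circle diffeomorphism. -/
def symm (f : AnalyticCircleDiffeo) : AnalyticCircleDiffeo where
  toFun := f.invFun
  invFun := f.toFun
  analyticAt_toFun := f.analyticAt_invFun
  analyticAt_invFun := f.analyticAt_toFun
  strictMono_toFun := fun x y hxy => by
    have h := f.strictMono_toFun.lt_iff_lt (a := f.invFun x) (b := f.invFun y)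
    rw [f.rightInverse x, f.rightInverse y] at h
    exact h.mp hxy
  leftInverse := f.rightInverse
  rightInverse := f.leftInverse
  map_add_one := fun x => by
    apply f.strictMono_toFun.injective
    rw [f.rightInverse, f.map_add_one, f.rightInverse]

/-- The circle diffeomorphism `f + ω : x ↦ f x + ω`. -/
noncomputable def addConst (f : AnalyticCircleDiffeo) (ω : ℝ) : AnalyticCircleDiffeo where
  toFun := fun x => f.toFun x + ω
  invFun := fun x => f.invFun (x - ω)
  analyticAt_toFun := fun x => (f.analyticAt_toFun x).add analyticAt_const
  analyticAt_invFun := fun x => by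
    have h1 : AnalyticAt ℝ (fun y : ℝ => y - ω) x := analyticAt_id.sub analyticAt_const
    have h2 : AnalyticAt ℝ (f.invFun ∘ fun y : ℝ => y - ω) x :=
      AnalyticAt.comp (g := f.invFun) (f := fun y : ℝ => y - ω)
        (f.analyticAt_invFun (x - ω)) h1
    exact h2
  strictMono_toFun := fun x y hxy => by
    have h := f.strictMono_toFun hxy
    show f.toFun x + ω < f.toFun y + ω
    linarith
  leftInverse := fun x => by
    show f.invFun (f.toFun x + ω - ω) = x
    rw [add_sub_cancel_right, f.leftInverse x]
  rightInverse := fun x => by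
    show f.toFun (f.invFun (x - ω)) + ω = x
    rw [f.rightInverse (x - ω)]; ring
  map_add_one := fun x => by
    show f.toFun (x + 1) + ω = f.toFun x + ω + 1
    rw [f.map_add_one]; ring

/-- Two circle diffeomorphisms are analytically conjugate: `f₂ = h ∘ f₁ ∘ h⁻¹` as maps
of `ℝ/ℤ`; in terms of lifts, `h ∘ f₁ = f₂ ∘ h + k` for some integer `k`. -/
def Conjugate (f₁ f₂ : AnalyticCircleDiffeo) : Prop :=
  ∃ h : AnalyticCircleDiffeo, ∃ k : ℤ,
    ∀ x, h.toFun (f₁.toFun x) = f₂.toFun (h.toFun x) + k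

/-- `f` is the identity of `ℝ/ℤ`, i.e. its lift is an integer translation. -/
def IsId (f : AnalyticCircleDiffeo) : Prop :=
  ∃ k : ℤ, ∀ x, f.toFun x = x + k

/-- A circle diffeomorphism (with rotation number `0 mod 1`) is hyperbolic if it has a
fixed point on `ℝ/ℤ` and the multiplier at every fixed point is `≠ 1`. -/
def Hyperbolic (f : AnalyticCircleDiffeo) : Prop :=
  (∃ x : ℝ, ∃ k : ℤ, f.toFun x = x + k) ∧
    ∀ x : ℝ, (∃ k : ℤ, f.toFun x = x + k) → deriv f.toFun x ≠ 1

end AnalyticCircleDiffeo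

/-- A real number is Diophantine. -/
def Diophantine (ρ : ℝ) : Prop :=
  ∃ C > (0:ℝ), ∃ β > (0:ℝ), ∀ p : ℤ, ∀ q : ℕ, 0 < q →
    |ρ - p / q| ≥ C / (q : ℝ) ^ ((2:ℝ) + β)

/-! If `f₁ w - w ∉ ℤ` and `f₂ u - u ∉ ℤ`, it suffices to find `h` with `h w = u` and
`h (f₁ w) ≡ f₂ u (mod 1)`: then `h ∘ f₁ ∘ h⁻¹ ∘ f₂⁻¹` fixes `f₂ u` mod 1. After translations,
this asks that the analytic diffeomorphisms fixing `0` act transitively on `(0, 1)`. The maps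
`x ↦ x + t sin² (π x)` with `|t| < 1/π` move a point `a ∈ (0, 1)` to every point near `a`, so
all orbits in `(0, 1)` are open, and `(0, 1)` is connected. -/

open scoped ContDiff in
lemma OrderIso.analyticAt_symm_of_deriv_ne_zero (e : ℝ ≃o ℝ) (he : ∀ x, AnalyticAt ℝ e x)
    (he' : ∀ x, deriv e x ≠ 0) (y : ℝ) : AnalyticAt ℝ e.symm y := by
  have hω : ContDiff ℝ ω (e.toHomeomorph.symm : ℝ → ℝ) :=
    e.toHomeomorph.contDiff_symm_deriv he' (fun x ↦ (he x).differentiableAt.hasDerivAt)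
      (AnalyticOnNhd.contDiff fun x _ ↦ he x)
  exact hω.contDiffAt.analyticAt

namespace AnalyticCircleDiffeo

@[simp] lemma comp_toFun (f g : AnalyticCircleDiffeo) : (f.comp g).toFun = f.toFun ∘ g.toFun :=
  rfl

@[simp] lemma symm_toFun (f : AnalyticCircleDiffeo) : f.symm.toFun = f.invFun := rfl

@[simp] lemma addConst_toFun (f : AnalyticCircleDiffeo) (ω x : ℝ) :
    (f.addConst ω).toFun x = f.toFun x + ω := rfl

def refl : AnalyticCircleDiffeo where
  toFun := id
  invFun := id
  analyticAt_toFun _ := analyticAt_id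
  analyticAt_invFun _ := analyticAt_id
  strictMono_toFun := strictMono_id
  leftInverse _ := rfl
  rightInverse _ := rfl
  map_add_one _ := rfl

@[simp] lemma refl_toFun (x : ℝ) : refl.toFun x = x := rfl

lemma continuous_toFun (f : AnalyticCircleDiffeo) : Continuous f.toFun :=
  continuous_iff_continuousAt.2 fun x ↦ (f.analyticAt_toFun x).continuousAt

def toCircleDeg1Lift (f : AnalyticCircleDiffeo) : CircleDeg1Lift :=
  ⟨⟨f.toFun, f.strictMono_toFun.monotone⟩, f.map_add_one⟩

lemma map_add_int (f : AnalyticCircleDiffeo) (x : ℝ) (k : ℤ) :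
    f.toFun (x + k) = f.toFun x + k :=
  f.toCircleDeg1Lift.map_add_int x k

lemma rot_eq_translationNumber (f : AnalyticCircleDiffeo) :
    f.rot = f.toCircleDeg1Lift.translationNumber := by
  have hpow (n : ℕ) : (f.toCircleDeg1Lift ^ n) 0 = f.toFun^[n] 0 := by
    rw [CircleDeg1Lift.coe_pow]; rfl
  simpa only [rot, hpow] using f.toCircleDeg1Lift.tendsto_translation_number₀.limUnder_eq

lemma rot_eq_of_map_eq_add_int (f : AnalyticCircleDiffeo) {x : ℝ} {k : ℤ}
    (h : f.toFun x = x + k) : f.rot = k := by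
  rw [rot_eq_translationNumber]
  exact CircleDeg1Lift.translationNumber_of_eq_add_int _ h

lemma exists_sub_ne_int (f : AnalyticCircleDiffeo) (hf : ¬ IsId f) :
    ∃ w, ∀ k : ℤ, f.toFun w - w ≠ k := by
  by_contra! hint
  obtain ⟨k, hk⟩ := hint 0
  refine hf ⟨k, fun x ↦ ?_⟩
  have hconst : (fun y ↦ f.toFun y - y) '' Set.univ ⊆ Set.range ((↑) : ℤ → ℝ) := by
    rintro _ ⟨y, -, rfl⟩
    obtain ⟨m, hm⟩ := hint y
    exact ⟨m, hm.symm⟩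
  have := (Set.countable_range _).isTotallyDisconnected _ hconst
    (isPreconnected_univ.image _ (f.continuous_toFun.sub continuous_id).continuousOn)
    (Set.mem_image_of_mem _ (Set.mem_univ x)) (Set.mem_image_of_mem _ (Set.mem_univ 0))
  linarith

noncomputable def ofAnalytic (F : ℝ → ℝ) (hF : ∀ x, AnalyticAt ℝ F x) (hF' : ∀ x, 0 < deriv F x)
    (hF1 : ∀ x, F (x + 1) = F x + 1) : AnalyticCircleDiffeo :=
  have hmono : StrictMono F := strictMono_of_deriv_pos hF'
  have hsurj : Function.Surjective F :=
    (CircleDeg1Lift.continuous_iff_surjective ⟨⟨F, hmono.monotone⟩, hF1⟩).1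
      (continuous_iff_continuousAt.2 fun x ↦ (hF x).continuousAt)
  let e := StrictMono.orderIsoOfSurjective F hmono hsurj
  { toFun := F
    invFun := e.symm
    analyticAt_toFun := hF
    analyticAt_invFun := OrderIso.analyticAt_symm_of_deriv_ne_zero e hF fun x ↦ (hF' x).ne'
    strictMono_toFun := hmono
    leftInverse := e.symm_apply_apply
    rightInverse := e.apply_symm_apply
    map_add_one := hF1 }

open Real

lemma hasDerivAt_add_mul_sin_sq (t x : ℝ) :
    HasDerivAt (fun y ↦ y + t * sin (π * y) ^ 2) (1 + π * t * sin (2 * (π * x))) x := by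
  have hsin : HasDerivAt (fun y ↦ sin (π * y)) (cos (π * x) * π) x := by
    simpa using ((hasDerivAt_id x).const_mul π).sin
  exact ((hasDerivAt_id' x).fun_add ((hsin.fun_pow 2).const_mul t)).congr_deriv
    (by rw [sin_two_mul]; ring)

lemma deriv_add_mul_sin_sq_pos {t : ℝ} (ht : |t| < π⁻¹) (x : ℝ) :
    0 < deriv (fun y ↦ y + t * sin (π * y) ^ 2) x := by
  rw [(hasDerivAt_add_mul_sin_sq t x).deriv]
  have hlt : |π * t * sin (2 * (π * x))| < 1 := by
    rw [abs_mul, abs_mul, abs_of_pos pi_pos]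
    calc π * |t| * |sin (2 * (π * x))| ≤ π * |t| :=
          mul_le_of_le_one_right (by positivity) (abs_sin_le_one _)
      _ < π * π⁻¹ := by gcongr
      _ = 1 := mul_inv_cancel₀ pi_ne_zero
  linarith [neg_abs_le (π * t * sin (2 * (π * x)))]

noncomputable def bump (t : ℝ) (ht : |t| < π⁻¹) : AnalyticCircleDiffeo :=
  ofAnalytic (fun x ↦ x + t * sin (π * x) ^ 2)
    (fun x ↦ analyticAt_id.add (analyticAt_const.mul
      ((analyticAt_sin.comp (analyticAt_const.mul analyticAt_id)).pow 2)))
    (deriv_add_mul_sin_sq_pos ht)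
    (fun x ↦ by simp only [mul_add, mul_one, sin_add_pi, neg_sq]; ring)

@[simp] lemma bump_toFun (t : ℝ) (ht : |t| < π⁻¹) (x : ℝ) :
    (bump t ht).toFun x = x + t * sin (π * x) ^ 2 := rfl

lemma eventually_exists_map_zero_map_eq {a : ℝ} (ha : a ∈ Set.Ioo (0 : ℝ) 1) :
    ∀ᶠ b in 𝓝 a, ∃ H : AnalyticCircleDiffeo, H.toFun 0 = 0 ∧ H.toFun a = b := by
  have hs : 0 < sin (π * a) ^ 2 := by
    have := sin_pos_of_pos_of_lt_pi (mul_pos pi_pos ha.1) (by nlinarith [pi_pos, ha.2])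
    positivity
  filter_upwards [Metric.ball_mem_nhds a (div_pos hs pi_pos)] with b hb
  set t := (b - a) / sin (π * a) ^ 2
  have ht : |t| < π⁻¹ := by
    rw [abs_div, abs_of_pos hs, div_lt_iff₀ hs, ← div_eq_inv_mul]
    exact hb
  refine ⟨bump t ht, by simp, ?_⟩
  simp only [bump_toFun, t, div_mul_cancel₀ _ hs.ne']
  ring

lemma exists_map_zero_map_eq {a b : ℝ} (ha : a ∈ Set.Ioo (0 : ℝ) 1)
    (hb : b ∈ Set.Ioo (0 : ℝ) 1) :
    ∃ H : AnalyticCircleDiffeo, H.toFun 0 = 0 ∧ H.toFun a = b := by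
  refine isPreconnected_Ioo.induction₂ (fun a b ↦ ∃ H : AnalyticCircleDiffeo,
    H.toFun 0 = 0 ∧ H.toFun a = b) (fun a ha ↦ ?_) ?_ ?_ ha hb
  · exact (eventually_exists_map_zero_map_eq ha).filter_mono nhdsWithin_le_nhds
  · rintro a b c - - - ⟨H₁, h₁0, h₁a⟩ ⟨H₂, h₂0, h₂b⟩
    exact ⟨H₂.comp H₁, by simp [h₁0, h₂0], by simp [h₁a, h₂b]⟩
  · rintro a b - - ⟨H, h0, ha⟩
    exact ⟨H.symm, by simpa [h0] using H.leftInverse 0, by simpa [ha] using H.leftInverse a⟩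

lemma exists_map_eq_and_map_eq_add_int {w p u v : ℝ} (hp : ∀ k : ℤ, p - w ≠ k)
    (hv : ∀ k : ℤ, v - u ≠ k) :
    ∃ h : AnalyticCircleDiffeo, h.toFun w = u ∧ ∃ k : ℤ, h.toFun p = v + k := by
  have fract_mem {x : ℝ} (hx : ∀ k : ℤ, x ≠ k) : Int.fract x ∈ Set.Ioo (0 : ℝ) 1 :=
    ⟨Int.fract_pos.2 (hx ⌊x⌋), Int.fract_lt_one x⟩
  obtain ⟨H, hH0, hH⟩ := exists_map_zero_map_eq (fract_mem hp) (fract_mem hv)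
  refine ⟨(H.comp (refl.addConst (-w))).addConst u, by simp [hH0], ⌊p - w⌋ - ⌊v - u⌋, ?_⟩
  have hpw : p + -w = Int.fract (p - w) + ⌊p - w⌋ := by rw [Int.fract_add_floor]; ring
  simp only [addConst_toFun, comp_toFun, Function.comp_apply, refl_toFun]
  rw [hpw, map_add_int, hH, ← Int.self_sub_floor, Int.cast_sub]
  ring

end AnalyticCircleDiffeo

open AnalyticCircleDiffeo in
/-- For analytic circle diffeomorphisms `f₁ ≠ id` and `f₂ ≠ id`, there
is an analytic circle diffeomorphism `h` such that `(h ∘ f₁ ∘ h⁻¹) ∘ f₂⁻¹` has a fixed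
point on `ℝ/ℤ`; in particular its rotation number is `0 (mod 1)`. -/
theorem statement4 (f₁ f₂ : AnalyticCircleDiffeo)
    (h₁ : ¬ IsId f₁) (h₂ : ¬ IsId f₂) :
    ∃ h : AnalyticCircleDiffeo,
      (∃ x : ℝ, ∃ k : ℤ,
        (((h.comp f₁).comp h.symm).comp f₂.symm).toFun x = x + (k : ℝ)) ∧
      (∃ k : ℤ, rot (((h.comp f₁).comp h.symm).comp f₂.symm) = (k : ℝ)) := by
  obtain ⟨w, hw⟩ := f₁.exists_sub_ne_int h₁
  obtain ⟨u, hu⟩ := f₂.exists_sub_ne_int h₂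
  obtain ⟨h, hwu, k, hk⟩ := exists_map_eq_and_map_eq_add_int hw hu
  have hfix : (((h.comp f₁).comp h.symm).comp f₂.symm).toFun (f₂.toFun u) = f₂.toFun u + k := by
    have hinv : h.invFun u = w := by rw [← hwu, h.leftInverse]
    simp [f₂.leftInverse u, hinv, hk]
  exact ⟨h, ⟨_, k, hfix⟩, k, rot_eq_of_map_eq_add_int _ hfix⟩
end

section
/- Let Ω ⊂ ℂ be open with ω₀ ∈ Ω, and let U, V ⊂ ℂ be open horizontal strips invariant under z ↦ z+1. Let F : Ω × U → ℂ and G : Ω × V → ℂ be holomorphic in both variables, satisfying F(ω, z+1) = F(ω, z) + 1 and G(ω, z+1) = G(ω, z) + 1, with ∂_z F ≠ 0 and ∂_z G ≠ 0, and with G(ω, ·) injective on V. Let τ : Ω → ℂ be holomorphic and suppose F(ω, G(ω, z)) = G(ω, z + τ(ω)) for all ω ∈ Ω and all z for which both sides are defined. Let γ : [0,1] → ℂ be a C¹ curve with γ(1) = γ(0) + 1 whose image lies in G(ω₀, ·)(V) ∩ U, let Γ := G(ω₀, ·)⁻¹ ∘ γ, and assume the 1-periodic holomorphic function z ↦ ∂_ω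 G(ω₀, z)/∂_z G(ω₀, z) is holomorphic on a domain in V containing Γ, Γ + τ(ω₀), and the region between these two curves. Then the derivative of τ at ω₀ is given by the contour integral τ'(ω₀) = ∫_γ [∂_ω F(ω₀, w) / ∂_z F(ω₀, w)] · ((G(ω₀, ·)⁻¹)'(w))² dw. -/
/-!
Write `τ₀ = τ(ω₀)` and `φ = variationField G ω₀ = ∂_ω G(ω₀, ·) / ∂_z G(ω₀, ·)`. Differentiating
the conjugacy `F(ω, G(ω, z)) = G(ω, z + τ(ω))` in `ω` and in `z` and eliminating
`∂_z G(ω₀, z + τ₀)` gives the pointwise identity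
`∂_ω F(ω₀, G z) / (∂_z F(ω₀, G z) ∂_z G(ω₀, z)) = τ'(ω₀) + φ(z + τ₀) - φ(z)`.
Integrate it along the lift `Γ` of `γ`, which runs from `Γ 0` to `Γ 0 + 1` and has
`Γ' = γ' / ∂_z G(ω₀, Γ)`: the left side becomes the claimed integral, the constant gives `τ'(ω₀)`,
and `∫_Γ (φ(z + τ₀) - φ(z)) dz` vanishes. Indeed, it is the integral of `τ₀ φ'(Γ t + s τ₀) Γ'(t)`
over `(t, s) ∈ [0, 1]²`; integrating first in `t` instead leaves
`τ₀ ∫ (φ(Γ 1 + s τ₀) - φ(Γ 0 + s τ₀)) ds`, which is `0` because `φ` is 1-periodic.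
-/

open Set Filter Topology MeasureTheory

lemma isOpen_setOf_im_mem_Ioo (a b : ℝ) : IsOpen {z : ℂ | a < z.im ∧ z.im < b} :=
  (isOpen_lt continuous_const Complex.continuous_im).inter
    (isOpen_lt Complex.continuous_im continuous_const)

section PartialDerivatives

variable {𝕜 E : Type*} [NontriviallyNormedField 𝕜] [NormedAddCommGroup E] [NormedSpace 𝕜 E]
  {f : 𝕜 → 𝕜 → E} {a b : 𝕜}

lemma DifferentiableAt.hasDerivAt_partial_fst
    (hf : DifferentiableAt 𝕜 (fun p : 𝕜 × 𝕜 => f p.1 p.2) (a, b)) :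
    HasDerivAt (fun x => f x b) (deriv (fun x => f x b) a) a :=
  (hf.comp (f := fun x => (x, b)) a
    (differentiableAt_id.prodMk (differentiableAt_const b))).hasDerivAt

lemma DifferentiableAt.hasDerivAt_partial_snd
    (hf : DifferentiableAt 𝕜 (fun p : 𝕜 × 𝕜 => f p.1 p.2) (a, b)) :
    HasDerivAt (f a) (deriv (f a) b) b :=
  (hf.comp (f := fun y => (a, y)) b
    ((differentiableAt_const a).prodMk differentiableAt_id)).hasDerivAt

lemma DifferentiableAt.hasDerivAt_comp_graph
    (hf : DifferentiableAt 𝕜 (fun p : 𝕜 × 𝕜 => f p.1 p.2) (a, b))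
    {g : 𝕜 → 𝕜} {g' : 𝕜} (hg : HasDerivAt g g' a) (hgb : g a = b) :
    HasDerivAt (fun x => f x (g x)) (deriv (fun x => f x b) a + g' • deriv (f a) b) a := by
  subst hgb
  set D := fderiv 𝕜 (fun p : 𝕜 × 𝕜 => f p.1 p.2) (a, g a)
  have hD : HasFDerivAt (fun p : 𝕜 × 𝕜 => f p.1 p.2) D (a, g a) := hf.hasFDerivAt
  have hfst : HasDerivAt (fun x => f x (g a)) (D (1, 0)) a :=
    hD.comp_hasDerivAt (f := fun x => (x, g a)) a
      ((hasDerivAt_id a).prodMk (hasDerivAt_const a (g a)))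
  have hsnd : HasDerivAt (f a) (D (0, 1)) (g a) :=
    hD.comp_hasDerivAt (f := fun y => (a, y)) (g a)
      ((hasDerivAt_const (g a) a).prodMk (hasDerivAt_id (g a)))
  have hsplit : D (1, g') = D (1, 0) + g' • D (0, 1) := by
    rw [← map_smul, ← map_add]
    simp
  rw [hfst.deriv, hsnd.deriv, ← hsplit]
  exact hD.comp_hasDerivAt (f := fun x => (x, g x)) a ((hasDerivAt_id a).prodMk hg)

end PartialDerivatives

section Conjugacy

variable {𝕜 : Type*} [NontriviallyNormedField 𝕜]

lemma deriv_mul_deriv_eq_of_comp_eventuallyEq {f g : 𝕜 → 𝕜} {z c : 𝕜}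
    (hf : DifferentiableAt 𝕜 f (g z)) (hg : DifferentiableAt 𝕜 g z)
    (hgc : DifferentiableAt 𝕜 g (z + c)) (h : ∀ᶠ w in 𝓝 z, f (g w) = g (w + c)) :
    deriv f (g z) * deriv g z = deriv g (z + c) :=
  (hf.hasDerivAt.comp z hg.hasDerivAt).unique
    ((hgc.hasDerivAt.comp_add_const z c).congr_of_eventuallyEq h)

noncomputable def variationField (G : 𝕜 → 𝕜 → 𝕜) (ω₀ z : 𝕜) : 𝕜 :=
  deriv (fun ω => G ω z) ω₀ / deriv (G ω₀) z

lemma variationField_add_of_eventually {G : 𝕜 → 𝕜 → 𝕜} {ω₀ z p c : 𝕜}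
    (h : ∀ᶠ q in 𝓝 (ω₀, z), G q.1 (q.2 + p) = G q.1 q.2 + c) :
    variationField G ω₀ (z + p) = variationField G ω₀ z := by
  have hω : (fun ω => G ω (z + p)) =ᶠ[𝓝 ω₀] fun ω => G ω z + c :=
    (tendsto_id.prodMk_nhds tendsto_const_nhds).eventually h
  have hz : (fun w => G ω₀ (w + p)) =ᶠ[𝓝 z] fun w => G ω₀ w + c :=
    (tendsto_const_nhds.prodMk_nhds tendsto_id).eventually h
  have hzderiv : deriv (G ω₀) (z + p) = deriv (G ω₀) z := by
    rw [← deriv_comp_add_const, hz.deriv_eq, deriv_add_const]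
  rw [variationField, variationField, hω.deriv_eq, deriv_add_const, hzderiv]

lemma deriv_eq_of_conj {F G : 𝕜 → 𝕜 → 𝕜} {τ : 𝕜 → 𝕜} {ω₀ z : 𝕜}
    (hF : DifferentiableAt 𝕜 (fun p : 𝕜 × 𝕜 => F p.1 p.2) (ω₀, G ω₀ z))
    (hG : DifferentiableAt 𝕜 (fun p : 𝕜 × 𝕜 => G p.1 p.2) (ω₀, z))
    (hGτ : DifferentiableAt 𝕜 (fun p : 𝕜 × 𝕜 => G p.1 p.2) (ω₀, z + τ ω₀))
    (hτ : DifferentiableAt 𝕜 τ ω₀)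
    (hconj : ∀ᶠ p in 𝓝 (ω₀, z), F p.1 (G p.1 p.2) = G p.1 (p.2 + τ p.1))
    (hFz : deriv (F ω₀) (G ω₀ z) ≠ 0) (hGz : deriv (G ω₀) z ≠ 0) :
    deriv τ ω₀ =
      deriv (fun ω => F ω (G ω₀ z)) ω₀ / (deriv (F ω₀) (G ω₀ z) * deriv (G ω₀) z)
        + variationField G ω₀ z - variationField G ω₀ (z + τ ω₀) := by
  have hz : deriv (F ω₀) (G ω₀ z) * deriv (G ω₀) z = deriv (G ω₀) (z + τ ω₀) :=
    deriv_mul_deriv_eq_of_comp_eventuallyEq hF.hasDerivAt_partial_snd.differentiableAt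
      hG.hasDerivAt_partial_snd.differentiableAt hGτ.hasDerivAt_partial_snd.differentiableAt
      ((tendsto_const_nhds.prodMk_nhds tendsto_id).eventually hconj)
  have hω : deriv (fun ω => F ω (G ω₀ z)) ω₀ + deriv (fun ω => G ω z) ω₀ • deriv (F ω₀) (G ω₀ z)
      = deriv (fun ω => G ω (z + τ ω₀)) ω₀ + deriv τ ω₀ • deriv (G ω₀) (z + τ ω₀) :=
    (hF.hasDerivAt_comp_graph hG.hasDerivAt_partial_fst rfl).unique
      ((hGτ.hasDerivAt_comp_graph (hτ.hasDerivAt.const_add z) rfl).congr_of_eventuallyEq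
        ((tendsto_id.prodMk_nhds tendsto_const_nhds).eventually hconj))
  rw [← hz, smul_eq_mul, smul_eq_mul] at hω
  rw [variationField, variationField, ← hz]
  field_simp
  linear_combination -hω

lemma eventually_conj_of_isOpen {Ω U V : Set 𝕜} (hΩ : IsOpen Ω) (hU : IsOpen U) (hV : IsOpen V)
    {F G : 𝕜 → 𝕜 → 𝕜} {τ : 𝕜 → 𝕜}
    (hconj : ∀ ω ∈ Ω, ∀ z ∈ V, z + τ ω ∈ V → G ω z ∈ U → F ω (G ω z) = G ω (z + τ ω))
    {ω₀ z : 𝕜} (hω₀ : ω₀ ∈ Ω) (hz : z ∈ V) (hzτ : z + τ ω₀ ∈ V) (hGz : G ω₀ z ∈ U)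
    (hτ : ContinuousAt τ ω₀) (hG : ContinuousAt (fun p : 𝕜 × 𝕜 => G p.1 p.2) (ω₀, z)) :
    ∀ᶠ p in 𝓝 (ω₀, z), F p.1 (G p.1 p.2) = G p.1 (p.2 + τ p.1) := by
  filter_upwards [(hΩ.prod hV).mem_nhds ⟨hω₀, hz⟩,
    (continuous_snd.continuousAt.add (hτ.comp continuous_fst.continuousAt)).preimage_mem_nhds
      (hV.mem_nhds hzτ),
    hG.preimage_mem_nhds (hU.mem_nhds hGz)] with p hp hpτ hpU
  exact hconj p.1 hp.1 p.2 hp.2 hpτ hpU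

end Conjugacy

lemma ContDiffOn.exists_continuousOn_hasDerivAt_Ioo {E : Type*} [NormedAddCommGroup E]
    [NormedSpace ℝ E] {f : ℝ → E} {a b : ℝ} (hab : a < b) (hf : ContDiffOn ℝ 1 f (Icc a b)) :
    ∃ f' : ℝ → E, ContinuousOn f' (Icc a b) ∧ ∀ t ∈ Ioo a b, HasDerivAt f (f' t) t := by
  refine ⟨derivWithin f (Icc a b), hf.continuousOn_derivWithin (uniqueDiffOn_Icc hab) le_rfl,
    fun t ht => ?_⟩
  have hmem : Icc a b ∈ 𝓝 t := Icc_mem_nhds ht.1 ht.2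
  rw [derivWithin_of_mem_nhds hmem]
  exact ((hf.differentiableOn one_ne_zero t (Ioo_subset_Icc_self ht)).differentiableAt
    hmem).hasDerivAt

section Lift

variable {𝕜 : Type*} [NontriviallyNormedField 𝕜] [CompleteSpace 𝕜] {g g' : 𝕜 → 𝕜} {V : Set 𝕜}

lemma exists_localInverse_of_injOn (hV : IsOpen V) (hinj : InjOn g V) {z₀ c : 𝕜}
    (hz₀ : z₀ ∈ V) (hg : HasStrictDerivAt g c z₀) (hc : c ≠ 0) :
    ∃ ψ : 𝕜 → 𝕜, HasStrictDerivAt ψ c⁻¹ (g z₀) ∧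
      ∀ᶠ w in 𝓝 (g z₀), ∀ z ∈ V, g z = w → ψ w = z := by
  have hψ := hg.to_localInverse hc
  have hψz₀ : hg.localInverse g c z₀ hc (g z₀) = z₀ :=
    (hg.eventually_left_inverse hc).self_of_nhds
  have hψV : ∀ᶠ w in 𝓝 (g z₀), hg.localInverse g c z₀ hc w ∈ V :=
    hψ.hasDerivAt.continuousAt.preimage_mem_nhds (by rw [hψz₀]; exact hV.mem_nhds hz₀)
  refine ⟨_, hψ, ?_⟩
  filter_upwards [hg.eventually_right_inverse hc, hψV] with w hgψ hψw z hz hgz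
  exact hinj hψw hz (hgψ.trans hgz.symm)

variable {X : Type*} [TopologicalSpace X] {s : Set X} {γ Γ : X → 𝕜}

lemma exists_localInverse_comp_of_injOn (hV : IsOpen V) (hinj : InjOn g V)
    (hg : ∀ z ∈ V, HasStrictDerivAt g (g' z) z) (hg' : ∀ z ∈ V, g' z ≠ 0)
    (hγ : ContinuousOn γ s) (hΓ : ∀ t ∈ s, Γ t ∈ V ∧ g (Γ t) = γ t) {t₀ : X} (ht₀ : t₀ ∈ s) :
    ∃ ψ : 𝕜 → 𝕜, HasStrictDerivAt ψ (g' (Γ t₀))⁻¹ (γ t₀) ∧ Γ =ᶠ[𝓝[s] t₀] ψ ∘ γ := by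
  obtain ⟨hΓV, hgΓ⟩ := hΓ t₀ ht₀
  obtain ⟨ψ, hψ, hψinv⟩ := exists_localInverse_of_injOn hV hinj hΓV (hg _ hΓV) (hg' _ hΓV)
  rw [hgΓ] at hψ hψinv
  refine ⟨ψ, hψ, ?_⟩
  filter_upwards [hγ t₀ ht₀ hψinv, self_mem_nhdsWithin] with t hψt ht
  exact (hψt (Γ t) (hΓ t ht).1 (hΓ t ht).2).symm

lemma continuousOn_of_injOn_comp (hV : IsOpen V) (hinj : InjOn g V)
    (hg : ∀ z ∈ V, HasStrictDerivAt g (g' z) z) (hg' : ∀ z ∈ V, g' z ≠ 0)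
    (hγ : ContinuousOn γ s) (hΓ : ∀ t ∈ s, Γ t ∈ V ∧ g (Γ t) = γ t) : ContinuousOn Γ s := by
  intro t ht
  obtain ⟨ψ, hψ, hev⟩ := exists_localInverse_comp_of_injOn hV hinj hg hg' hγ hΓ ht
  exact (hψ.hasDerivAt.continuousAt.comp_continuousWithinAt (hγ t ht)).congr_of_eventuallyEq hev
    (hev.eq_of_nhdsWithin ht)

lemma hasDerivAt_of_injOn_comp [NormedAlgebra ℝ 𝕜] {s : Set ℝ} {γ Γ : ℝ → 𝕜}
    (hV : IsOpen V) (hinj : InjOn g V)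
    (hg : ∀ z ∈ V, HasStrictDerivAt g (g' z) z) (hg' : ∀ z ∈ V, g' z ≠ 0)
    (hγ : ContinuousOn γ s) (hΓ : ∀ t ∈ s, Γ t ∈ V ∧ g (Γ t) = γ t) {t : ℝ} (hs : s ∈ 𝓝 t)
    {c : 𝕜} (hγd : HasDerivAt γ c t) : HasDerivAt Γ (c / g' (Γ t)) t := by
  obtain ⟨ψ, hψ, hev⟩ :=
    exists_localInverse_comp_of_injOn hV hinj hg hg' hγ hΓ (mem_of_mem_nhds hs)
  rw [nhdsWithin_eq_nhds.2 hs] at hev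
  rw [div_eq_inv_mul]
  exact (hψ.hasDerivAt.comp t hγd).congr_of_eventuallyEq hev

lemma exists_continuousOn_hasDerivAt_of_injOn_comp [NormedAlgebra ℝ 𝕜] {a b : ℝ} (hab : a < b)
    {γ Γ : ℝ → 𝕜} (hV : IsOpen V) (hinj : InjOn g V)
    (hg : ∀ z ∈ V, HasStrictDerivAt g (g' z) z) (hg' : ∀ z ∈ V, g' z ≠ 0)
    (hg'c : ContinuousOn g' V) (hγ : ContDiffOn ℝ 1 γ (Icc a b))
    (hΓ : ∀ t ∈ Icc a b, Γ t ∈ V ∧ g (Γ t) = γ t) :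
    ContinuousOn Γ (Icc a b) ∧ ∃ Γ' : ℝ → 𝕜, ContinuousOn Γ' (Icc a b) ∧
      ∀ t ∈ Ioo a b, HasDerivAt Γ (Γ' t) t ∧ Γ' t = deriv γ t / g' (Γ t) := by
  obtain ⟨γ', hγ'c, hγ'⟩ := hγ.exists_continuousOn_hasDerivAt_Ioo hab
  have hΓc := continuousOn_of_injOn_comp hV hinj hg hg' hγ.continuousOn hΓ
  refine ⟨hΓc, fun t => γ' t / g' (Γ t),
    hγ'c.div (hg'c.comp hΓc fun t ht => (hΓ t ht).1) fun t ht => hg' _ (hΓ t ht).1,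
    fun t ht => ⟨?_, by rw [(hγ' t ht).deriv]⟩⟩
  exact hasDerivAt_of_injOn_comp hV hinj hg hg' hγ.continuousOn hΓ (Icc_mem_nhds ht.1 ht.2)
    (hγ' t ht)

end Lift

section Integration

variable {φ : ℂ → ℂ} {W : Set ℂ}

lemma integral_deriv_comp_mul_eq_sub (hW : IsOpen W) (hφ : DifferentiableOn ℂ φ W)
    {c c' : ℝ → ℂ} {a b : ℝ} (hab : a ≤ b) (hc : ContinuousOn c (Icc a b))
    (hc' : ContinuousOn c' (Icc a b)) (hcd : ∀ t ∈ Ioo a b, HasDerivAt c (c' t) t)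
    (hcW : MapsTo c (Icc a b) W) :
    ∫ t in a..b, deriv φ (c t) * c' t = φ (c b) - φ (c a) := by
  have hint : IntervalIntegrable (fun t => deriv φ (c t) * c' t) volume a b :=
    (((hφ.deriv hW).continuousOn.comp hc hcW).mul hc').intervalIntegrable_of_Icc hab
  refine intervalIntegral.integral_eq_sub_of_hasDerivAt_of_le hab (hφ.continuousOn.comp hc hcW)
    (fun t ht => ?_) hint
  have hφt : HasDerivAt φ (deriv φ (c t)) (c t) :=
    (hφ.differentiableAt (hW.mem_nhds (hcW (Ioo_subset_Icc_self ht)))).hasDerivAt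
  simpa only [smul_eq_mul, mul_comm] using hφt.scomp t (hcd t ht)

lemma integral_sub_translate_mul_eq_zero (hW : IsOpen W) (hφ : DifferentiableOn ℂ φ W)
    {Γ Γ' : ℝ → ℂ} {τ : ℂ} (hΓ : ContinuousOn Γ (Icc 0 1)) (hΓ' : ContinuousOn Γ' (Icc 0 1))
    (hΓd : ∀ t ∈ Ioo 0 1, HasDerivAt Γ (Γ' t) t)
    (hmem : ∀ t ∈ Icc (0 : ℝ) 1, ∀ s ∈ Icc (0 : ℝ) 1, Γ t + (s : ℂ) * τ ∈ W)
    (hper : ∀ s ∈ Icc (0 : ℝ) 1, φ (Γ 1 + (s : ℂ) * τ) = φ (Γ 0 + (s : ℂ) * τ)) :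
    ∫ t in (0 : ℝ)..1, (φ (Γ t + τ) - φ (Γ t)) * Γ' t = 0 := by
  have hsquare : ContinuousOn (fun p : ℝ × ℝ => Γ p.1 + (p.2 : ℂ) * τ) (Icc 0 1 ×ˢ Icc 0 1) :=
    (hΓ.comp continuousOn_fst fun _ hp => hp.1).add (by fun_prop)
  have hcont : ContinuousOn (fun p : ℝ × ℝ => deriv φ (Γ p.1 + (p.2 : ℂ) * τ) * τ * Γ' p.1)
      (Icc 0 1 ×ˢ Icc 0 1) :=
    (((hφ.deriv hW).continuousOn.comp hsquare fun p hp => hmem _ hp.1 _ hp.2).mul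
      continuousOn_const).mul (hΓ'.comp continuousOn_fst fun _ hp => hp.1)
  have hsub : uIoc (0 : ℝ) 1 ×ˢ uIoc (0 : ℝ) 1 ⊆ Icc 0 1 ×ˢ Icc 0 1 := by
    rw [uIoc_of_le zero_le_one]
    exact prod_mono Ioc_subset_Icc_self Ioc_subset_Icc_self
  have hint :=
    (hcont.integrableOn_compact (μ := volume) (isCompact_Icc.prod isCompact_Icc)).mono_set hsub
  calc ∫ t in (0 : ℝ)..1, (φ (Γ t + τ) - φ (Γ t)) * Γ' t
      = ∫ t in (0 : ℝ)..1, ∫ s in (0 : ℝ)..1, deriv φ (Γ t + s * τ) * τ * Γ' t := by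
        refine intervalIntegral.integral_congr fun t ht => ?_
        rw [uIcc_of_le zero_le_one] at ht
        rw [intervalIntegral.integral_mul_const, integral_deriv_comp_mul_eq_sub hW hφ zero_le_one
          (by fun_prop) continuousOn_const (fun s _ => ?_) (fun s hs => hmem t ht s hs)]
        · simp
        · simpa using ((hasDerivAt_id s).ofReal_comp.mul_const τ).const_add (Γ t)
    _ = ∫ s in (0 : ℝ)..1, ∫ t in (0 : ℝ)..1, deriv φ (Γ t + s * τ) * τ * Γ' t :=
        intervalIntegral_intervalIntegral_swap hint
    _ = ∫ s in (0 : ℝ)..1, (0 : ℂ) := by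
        refine intervalIntegral.integral_congr fun s hs => ?_
        rw [uIcc_of_le zero_le_one] at hs
        simp_rw [mul_right_comm _ τ, intervalIntegral.integral_mul_const]
        rw [integral_deriv_comp_mul_eq_sub (c := fun t => Γ t + s * τ) hW hφ zero_le_one
          (hΓ.add continuousOn_const) hΓ' (fun t ht => (hΓd t ht).add_const _)
          (fun t ht => hmem t ht s hs), hper s hs, sub_self, zero_mul]
    _ = 0 := intervalIntegral.integral_zero

lemma integral_eq_of_eq_add_sub_mul (hW : IsOpen W) (hφ : DifferentiableOn ℂ φ W)
    {Γ Γ' f : ℝ → ℂ} {τ c : ℂ} (hΓ : ContinuousOn Γ (Icc 0 1)) (hΓ' : ContinuousOn Γ' (Icc 0 1))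
    (hΓd : ∀ t ∈ Ioo 0 1, HasDerivAt Γ (Γ' t) t) (hΓcl : Γ 1 = Γ 0 + 1)
    (hmem : ∀ t ∈ Icc (0 : ℝ) 1, ∀ s ∈ Icc (0 : ℝ) 1, Γ t + (s : ℂ) * τ ∈ W)
    (hper : ∀ s ∈ Icc (0 : ℝ) 1, φ (Γ 1 + (s : ℂ) * τ) = φ (Γ 0 + (s : ℂ) * τ))
    (hf : ∀ t ∈ Ioo 0 1, f t = (c + (φ (Γ t + τ) - φ (Γ t))) * Γ' t) :
    ∫ t in (0 : ℝ)..1, f t = c := by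
  have hΓ'int : IntervalIntegrable Γ' volume 0 1 := hΓ'.intervalIntegrable_of_Icc zero_le_one
  have hφint : IntervalIntegrable (fun t => (φ (Γ t + τ) - φ (Γ t)) * Γ' t) volume 0 1 := by
    have hφc := hφ.continuousOn
    refine ContinuousOn.intervalIntegrable_of_Icc zero_le_one (ContinuousOn.mul ?_ hΓ')
    refine (hφc.comp (hΓ.add continuousOn_const) fun t ht => ?_).sub
      (hφc.comp hΓ fun t ht => ?_)
    · simpa using hmem t ht 1 (right_mem_Icc.2 zero_le_one)
    · simpa using hmem t ht 0 (left_mem_Icc.2 zero_le_one)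
  rw [intervalIntegral.integral_congr_Ioo_of_le zero_le_one fun t ht => (hf t ht).trans
      (add_mul ..), intervalIntegral.integral_add (hΓ'int.const_mul c) hφint,
    integral_sub_translate_mul_eq_zero hW hφ hΓ hΓ' hΓd hmem hper,
    intervalIntegral.integral_const_mul,
    intervalIntegral.integral_eq_sub_of_hasDerivAt_of_le zero_le_one hΓ hΓd hΓ'int, hΓcl]
  ring

end Integration

theorem statement13_general
    (Ω U V : Set ℂ) (hΩ : IsOpen Ω) (ω₀ : ℂ) (hω₀ : ω₀ ∈ Ω)
    (hU : ∃ a b : ℝ, U = {z : ℂ | a < z.im ∧ z.im < b})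
    (hV : ∃ a b : ℝ, V = {z : ℂ | a < z.im ∧ z.im < b})
    (F G : ℂ → ℂ → ℂ)
    (hFa : ∀ ω ∈ Ω, ∀ z ∈ U, AnalyticAt ℂ (fun p : ℂ × ℂ => F p.1 p.2) (ω, z))
    (hGa : ∀ ω ∈ Ω, ∀ z ∈ V, AnalyticAt ℂ (fun p : ℂ × ℂ => G p.1 p.2) (ω, z))
    (hGper : ∀ ω ∈ Ω, ∀ z ∈ V, G ω (z + 1) = G ω z + 1)
    (hFz : ∀ ω ∈ Ω, ∀ z ∈ U, deriv (F ω) z ≠ 0)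
    (hGz : ∀ ω ∈ Ω, ∀ z ∈ V, deriv (G ω) z ≠ 0)
    (hGinj : ∀ ω ∈ Ω, Set.InjOn (G ω) V)
    (τ : ℂ → ℂ) (hτ : ∀ ω ∈ Ω, AnalyticAt ℂ τ ω)
    (hconj : ∀ ω ∈ Ω, ∀ z ∈ V, z + τ ω ∈ V → G ω z ∈ U →
      F ω (G ω z) = G ω (z + τ ω))
    (γ Γ : ℝ → ℂ)
    (hγC1 : ContDiffOn ℝ 1 γ (Set.Icc (0 : ℝ) 1))
    (hγcl : γ 1 = γ 0 + 1)
    (hγim : ∀ t ∈ Set.Icc (0 : ℝ) 1, γ t ∈ U ∧ γ t ∈ G ω₀ '' V)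
    (hΓ : ∀ t ∈ Set.Icc (0 : ℝ) 1, Γ t ∈ V ∧ G ω₀ (Γ t) = γ t)
    (W : Set ℂ) (hW : IsOpen W) (hWV : W ⊆ V)
    (hWbetween : ∀ t ∈ Set.Icc (0 : ℝ) 1, ∀ s ∈ Set.Icc (0 : ℝ) 1,
      Γ t + (s : ℂ) * τ ω₀ ∈ W)
    (hhol : DifferentiableOn ℂ
      (fun z => deriv (fun ω => G ω z) ω₀ / deriv (G ω₀) z) W) :
    deriv τ ω₀ =
      ∫ t in (0 : ℝ)..1,
        (deriv (fun ω => F ω (γ t)) ω₀ / deriv (F ω₀) (γ t)) *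
          (1 / deriv (G ω₀) (Γ t)) ^ 2 * deriv γ t := by
  have hUo : IsOpen U := by obtain ⟨a, b, rfl⟩ := hU; exact isOpen_setOf_im_mem_Ioo a b
  have hVo : IsOpen V := by obtain ⟨a, b, rfl⟩ := hV; exact isOpen_setOf_im_mem_Ioo a b
  have hV1 : ∀ z ∈ V, z + 1 ∈ V := by obtain ⟨a, b, rfl⟩ := hV; intro z hz; simpa using hz
  have hGω₀ : AnalyticOnNhd ℂ (G ω₀) V := fun z hz =>
    (hGa ω₀ hω₀ z hz).comp (analyticAt_const.prod analyticAt_id)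
  obtain ⟨hΓc, Γ', hΓ'c, hΓ'⟩ := exists_continuousOn_hasDerivAt_of_injOn_comp zero_lt_one hVo
    (hGinj ω₀ hω₀) (fun z hz => (hGω₀ z hz).hasStrictDerivAt) (hGz ω₀ hω₀)
    hGω₀.deriv.continuousOn hγC1 hΓ
  have h0 := hΓ 0 (left_mem_Icc.2 zero_le_one)
  have h1 := hΓ 1 (right_mem_Icc.2 zero_le_one)
  have hΓcl : Γ 1 = Γ 0 + 1 := hGinj ω₀ hω₀ h1.1 (hV1 _ h0.1) <| by
    rw [h1.2, hGper ω₀ hω₀ _ h0.1, h0.2, hγcl]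
  refine (integral_eq_of_eq_add_sub_mul hW hhol hΓc hΓ'c (fun t ht => (hΓ' t ht).1) hΓcl
    hWbetween (fun s hs => ?_) (fun t ht => ?_)).symm
  · have hz := hWV (hWbetween 0 (left_mem_Icc.2 zero_le_one) s hs)
    rw [hΓcl, add_right_comm]
    refine variationField_add_of_eventually (c := 1) ?_
    filter_upwards [(hΩ.prod hVo).mem_nhds ⟨hω₀, hz⟩] with p hp
    exact hGper p.1 hp.1 p.2 hp.2
  · have htI := Ioo_subset_Icc_self ht
    obtain ⟨hΓV, hGΓ⟩ := hΓ t htI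
    have hΓτ : Γ t + τ ω₀ ∈ V :=
      hWV (by simpa using hWbetween t htI 1 (right_mem_Icc.2 zero_le_one))
    have hGΓU : G ω₀ (Γ t) ∈ U := hGΓ ▸ (hγim t htI).1
    have hF0 := hFz ω₀ hω₀ _ hGΓU
    have hG0 := hGz ω₀ hω₀ _ hΓV
    have hτ' := deriv_eq_of_conj (hFa ω₀ hω₀ _ hGΓU).differentiableAt
      (hGa ω₀ hω₀ _ hΓV).differentiableAt (hGa ω₀ hω₀ _ hΓτ).differentiableAt
      (hτ ω₀ hω₀).differentiableAt (eventually_conj_of_isOpen hΩ hUo hVo hconj hω₀ hΓV hΓτ hGΓU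
        (hτ ω₀ hω₀).continuousAt (hGa ω₀ hω₀ _ hΓV).continuousAt) hF0 hG0
    rw [hGΓ] at hτ' hF0
    rw [(hΓ' t ht).2, hτ', variationField, variationField]
    field_simp
    ring

/-- derivative of the complex rotation number. Let `Ω ∋ ω₀` be open,
let `U, V` be open horizontal strips (invariant under `z ↦ z + 1`), let
`F, G : Ω × (U or V) → ℂ` be holomorphic in both variables, commuting with `z ↦ z + 1`,
with nonvanishing `z`-derivatives and `G(ω,·)` injective, and let `τ` be holomorphic
with the conjugacy equation `F(ω, G(ω,z)) = G(ω, z + τ(ω))`. If `γ` is a `C¹` lift of a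
simple loop winding once around the cylinder, lying in `G(ω₀,·)(V) ∩ U`, with lift
`Γ = G(ω₀,·)⁻¹ ∘ γ`, and the 1-periodic function `z ↦ ∂_ω G(ω₀,z)/∂_z G(ω₀,z)` is
holomorphic on a domain `W ⊆ V` containing `Γ`, `Γ + τ(ω₀)` and the region between them
(the linear homotopy between the two curves), then
`τ'(ω₀) = ∫_γ (∂_ω F(ω₀,w)/∂_z F(ω₀,w)) ((G(ω₀,·)⁻¹)'(w))² dw`, where
`(G(ω₀,·)⁻¹)'(γ t) = 1 / ∂_z G(ω₀, Γ t)`. -/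
theorem statement13
    (Ω U V : Set ℂ) (hΩ : IsOpen Ω) (ω₀ : ℂ) (hω₀ : ω₀ ∈ Ω)
    (hU : ∃ a b : ℝ, U = {z : ℂ | a < z.im ∧ z.im < b})
    (hV : ∃ a b : ℝ, V = {z : ℂ | a < z.im ∧ z.im < b})
    (F G : ℂ → ℂ → ℂ)
    (hFa : ∀ ω ∈ Ω, ∀ z ∈ U, AnalyticAt ℂ (fun p : ℂ × ℂ => F p.1 p.2) (ω, z))
    (hGa : ∀ ω ∈ Ω, ∀ z ∈ V, AnalyticAt ℂ (fun p : ℂ × ℂ => G p.1 p.2) (ω, z))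
    (hFper : ∀ ω ∈ Ω, ∀ z ∈ U, F ω (z + 1) = F ω z + 1)
    (hGper : ∀ ω ∈ Ω, ∀ z ∈ V, G ω (z + 1) = G ω z + 1)
    (hFz : ∀ ω ∈ Ω, ∀ z ∈ U, deriv (F ω) z ≠ 0)
    (hGz : ∀ ω ∈ Ω, ∀ z ∈ V, deriv (G ω) z ≠ 0)
    (hGinj : ∀ ω ∈ Ω, Set.InjOn (G ω) V)
    (τ : ℂ → ℂ) (hτ : ∀ ω ∈ Ω, AnalyticAt ℂ τ ω)
    (hconj : ∀ ω ∈ Ω, ∀ z ∈ V, z + τ ω ∈ V → G ω z ∈ U →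
      F ω (G ω z) = G ω (z + τ ω))
    (γ Γ : ℝ → ℂ)
    (hγC1 : ContDiffOn ℝ 1 γ (Set.Icc (0 : ℝ) 1))
    (hγcl : γ 1 = γ 0 + 1)
    (hγim : ∀ t ∈ Set.Icc (0 : ℝ) 1, γ t ∈ U ∧ γ t ∈ G ω₀ '' V)
    (hΓ : ∀ t ∈ Set.Icc (0 : ℝ) 1, Γ t ∈ V ∧ G ω₀ (Γ t) = γ t)
    (W : Set ℂ) (hW : IsOpen W) (hWV : W ⊆ V)
    (hWper : ∀ z ∈ W, z + 1 ∈ W)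
    (hWbetween : ∀ t ∈ Set.Icc (0 : ℝ) 1, ∀ s ∈ Set.Icc (0 : ℝ) 1,
      Γ t + (s : ℂ) * τ ω₀ ∈ W)
    (hhol : DifferentiableOn ℂ
      (fun z => deriv (fun ω => G ω z) ω₀ / deriv (G ω₀) z) W) :
    deriv τ ω₀ =
      ∫ t in (0 : ℝ)..1,
        (deriv (fun ω => F ω (γ t)) ω₀ / deriv (F ω₀) (γ t)) *
          (1 / deriv (G ω₀) (Γ t)) ^ 2 * deriv γ t :=
  statement13_general Ω U V hΩ ω₀ hω₀ hU hV F G hFa hGa hGper hFz hGz hGinj τ hτ hconj γ Γ hγC1 hγcl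
    hγim hΓ W hW hWV hWbetween hhol
end
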